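/- Let N, s ∈ ℕ, Δt > 0, and let D, D₊, D₋ ∈ ℝ^{N×N}. Let Ã, A ∈ ℝ^{s×s} and b̃, b ∈ ℝ^s be ImEx Butcher data of type II: the first rows of Ã and A are zero, and the lower-right submatrix = (aᵢⱼ)₂≤ᵢ,ⱼ≤s is invertible. Assume the method is globally stiffly accurate: ã_{sj} = b̃ⱼ and a_{sj} = bⱼ for all j. Define f(u) = −(1/3)(D(u∘u) + u∘(Du)). Fix uⁿ ∈ ℝ^N with well-prepared data vⁿ = D₋uⁿ and wⁿ = D D₋uⁿ. For each τ > 0 let stages Uᵢ(τ), Vᵢ(τ), Wᵢ(τ) satisfy U₁(τ) = uⁿ, V₁(τ) = vⁿ, W₁(τ) = wⁿ, and for i ≥ 2: Uᵢ(τ) = uⁿ + Δt·Σⱼ ãᵢⱼ f(Uⱼ(τ)) − Δt·Σⱼ aᵢⱼ D₊Wⱼ(τ), Vᵢ(τ) = vⁿ + (Δt/τ)·Σⱼ aᵢⱼ (DVⱼ(τ) − Wⱼ(τ)), Wᵢ(τ) = wⁿ + (Δt/τ)·Σⱼ aᵢⱼ (Vⱼ(τ) − D₋Uⱼ(τ)).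 Assume that as τ → 0⁺, Uᵢ(τ) → Uᵢ⁰, Vᵢ(τ) → Vᵢ⁰, Wᵢ(τ) → Wᵢ⁰ for each i. Then: (1) Vⱼ⁰ = D₋Uⱼ⁰ and Wⱼ⁰ = D Vⱼ⁰ for all j; (2) Uᵢ⁰ = uⁿ + Δt·Σⱼ ãᵢⱼ f(Uⱼ⁰) − Δt·Σⱼ aᵢⱼ D₊DD₋Uⱼ⁰ for all i, i.e., the limit stages satisfy the same ImEx method applied to the semidiscrete KdV equation; and (3) the updates converge with lim uⁿ⁺¹(τ) = U_s⁰, lim vⁿ⁺¹(τ) = D₋U_s⁰, and lim wⁿ⁺¹(τ) = D D₋U_s⁰, so the method is asymptotic-preserving for all components u, v, and w. -/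

import Mathlib

/-!
Write `x(τ)` for a relaxation stage. Its stage equation `x = xⁿ + (Δt/τ) · Σⱼ aᵢⱼ yⱼ` can be
rearranged to `Δt · Σⱼ aᵢⱼ yⱼ = τ · (x - xⁿ)`, whose right side tends to `0` as `τ → 0⁺`;
hence the limits satisfy `Σⱼ aᵢⱼ yⱼ⁰ = 0` for every `i ≥ 2`. For well-prepared data the
first-stage residual `y₁⁰` already vanishes, so invertibility of `Â` forces `yⱼ⁰ = 0` for all
`j`: this gives `Vⱼ⁰ = D₋Uⱼ⁰` and `Wⱼ⁰ = DVⱼ⁰`. Passing to the limit in the `U` equation then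
yields the ImEx method for KdV, and global stiff accuracy identifies each update with the last
stage, whose limits are now known.
-/

open Filter Matrix Topology

theorem Matrix.eq_zero_of_forall_sum_smul_eq_zero {n R E : Type*} [Fintype n] [DecidableEq n]
    [Semiring R] [AddCommMonoid E] [Module R E] {M : Matrix n n R} (hM : IsUnit M) {y : n → E}
    (hy : ∀ i, ∑ j, M i j • y j = 0) : y = 0 := by
  obtain ⟨M', hM'⟩ := hM.exists_left_inv
  funext k
  calc y k = ∑ j, (M' * M) k j • y j := by simp [hM', one_apply]
    _ = ∑ i, M' k i • ∑ j, M i j • y j := by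
      simp only [mul_apply, Finset.sum_smul, Finset.smul_sum, mul_smul]
      exact Finset.sum_comm
    _ = 0 := by simp [hy]

theorem Filter.Tendsto.const_matrix_mulVec {α m n R : Type*} [Fintype n]
    [NonUnitalNonAssocSemiring R] [TopologicalSpace R] [IsTopologicalSemiring R] {l : Filter α}
    (M : Matrix m n R) {Z : α → n → R} {z : n → R} (hZ : Tendsto Z l (𝓝 z)) :
    Tendsto (fun a => M *ᵥ Z a) l (𝓝 (M *ᵥ z)) :=
  ((continuous_const.matrix_mulVec continuous_id).tendsto z).comp hZ

theorem eq_of_tendsto_nhdsWithin_of_eqOn_const {α β : Type*} [TopologicalSpace α]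
    [TopologicalSpace β] [T2Space β] {S : Set α} {a : α} [(𝓝[S] a).NeBot] {X : α → β} {x c : β}
    (hX : Tendsto X (𝓝[S] a) (𝓝 x)) (h : S.EqOn X fun _ => c) : x = c :=
  tendsto_nhds_unique hX (tendsto_nhdsWithin_congr (fun _ hx => (h hx).symm) tendsto_const_nhds)

theorem Fin.sum_univ_eq_zero_add_sum_succ {M : Type*} [AddCommMonoid M] {s : ℕ} (hs : 0 < s)
    (g : Fin s → M) :
    ∑ j, g j = g ⟨0, hs⟩ + ∑ j : Fin (s - 1), g ⟨j.1 + 1, by omega⟩ := by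
  obtain ⟨n, rfl⟩ := Nat.exists_eq_add_one_of_ne_zero hs.ne'
  exact Fin.sum_univ_succ g

theorem Fin.forall_of_zero_of_pos {s : ℕ} (hs : 0 < s) {P : Fin s → Prop} (h0 : P ⟨0, hs⟩)
    (hpos : ∀ i : Fin s, 0 < i.1 → P i) : ∀ i, P i := by
  intro i
  rcases i.1.eq_zero_or_pos with hi | hi
  · rwa [show i = ⟨0, hs⟩ from Fin.ext hi]
  · exact hpos i hi

theorem stage_eq_of_first_row_eq_zero {R E : Type*} [Semiring R] [AddCommMonoid E] [Module R E]
    {s : ℕ} (hs : 0 < s) {A : Matrix (Fin s) (Fin s) R} (hA : ∀ j, A ⟨0, hs⟩ j = 0)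
    {X Y : Fin s → E} {c : E} {κ : R} (h0 : X ⟨0, hs⟩ = c)
    (h : ∀ i : Fin s, 0 < i.1 → X i = c + κ • ∑ j, A i j • Y j) :
    ∀ i, X i = c + κ • ∑ j, A i j • Y j :=
  Fin.forall_of_zero_of_pos hs (by simp [h0, hA]) h

theorem eq_zero_of_first_eq_zero_of_sum_smul_eq_zero {R E : Type*} [Semiring R]
    [AddCommMonoid E] [Module R E] {s : ℕ} (hs : 0 < s) {A : Matrix (Fin s) (Fin s) R}
    (hAhat : IsUnit (Matrix.of fun i j : Fin (s - 1) =>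
      A ⟨i.1 + 1, by omega⟩ ⟨j.1 + 1, by omega⟩))
    {x : Fin s → E} (hx0 : x ⟨0, hs⟩ = 0) (hx : ∀ i : Fin s, 0 < i.1 → ∑ j, A i j • x j = 0) :
    x = 0 := by
  have htail : (fun j : Fin (s - 1) => x ⟨j.1 + 1, by omega⟩) = 0 := by
    refine Matrix.eq_zero_of_forall_sum_smul_eq_zero hAhat fun i => ?_
    have := hx ⟨i.1 + 1, by omega⟩ i.1.succ_pos
    rwa [Fin.sum_univ_eq_zero_add_sum_succ hs, hx0, smul_zero, zero_add] at this
  funext j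
  refine Fin.forall_of_zero_of_pos hs (P := fun j => x j = 0) hx0 (fun j hj => ?_) j
  have hj' : (⟨j.1 - 1 + 1, by omega⟩ : Fin s) = j := Fin.ext (Nat.sub_add_cancel hj)
  simpa [hj'] using congrFun htail ⟨j.1 - 1, by omega⟩

section RelaxationLimit

variable {E : Type*} [AddCommGroup E] [Module ℝ E] [TopologicalSpace E]
  [IsTopologicalAddGroup E] [ContinuousSMul ℝ E] [T2Space E]

theorem eq_zero_of_tendsto_of_eq_add_div_smul {X Y : ℝ → E} {x y c : E} {Δt : ℝ} (hΔt : Δt ≠ 0)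
    (hX : Tendsto X (𝓝[>] 0) (𝓝 x)) (hY : Tendsto Y (𝓝[>] 0) (𝓝 y))
    (h : ∀ τ, 0 < τ → X τ = c + (Δt / τ) • Y τ) : y = 0 := by
  have hrescaled : ∀ τ ∈ Set.Ioi (0 : ℝ), τ • (X τ - c) = Δt • Y τ := fun τ hτ => by
    rw [h τ hτ, add_sub_cancel_left, smul_smul, mul_div_cancel₀ _ (ne_of_gt hτ)]
  have hvanish : Tendsto (fun τ => τ • (X τ - c)) (𝓝[>] 0) (𝓝 0) := by
    simpa using (tendsto_nhdsWithin_of_tendsto_nhds tendsto_id).smul (hX.sub_const c)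
  have hlim : Δt • y = 0 :=
    tendsto_nhds_unique (hY.const_smul Δt) (tendsto_nhdsWithin_congr hrescaled hvanish)
  exact (smul_eq_zero.mp hlim).resolve_left hΔt

theorem relaxation_stages_limit_eq_zero {s : ℕ} (hs : 0 < s) {A : Matrix (Fin s) (Fin s) ℝ}
    (hAhat : IsUnit (Matrix.of fun i j : Fin (s - 1) =>
      A ⟨i.1 + 1, by omega⟩ ⟨j.1 + 1, by omega⟩))
    {Δt : ℝ} (hΔt : Δt ≠ 0) {X Y : ℝ → Fin s → E} {x y : Fin s → E} {c : E}
    (hX : ∀ i, Tendsto (X · i) (𝓝[>] 0) (𝓝 (x i)))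
    (hY : ∀ j, Tendsto (Y · j) (𝓝[>] 0) (𝓝 (y j))) (hy0 : y ⟨0, hs⟩ = 0)
    (h : ∀ τ, 0 < τ → ∀ i : Fin s, 0 < i.1 → X τ i = c + (Δt / τ) • ∑ j, A i j • Y τ j) :
    y = 0 :=
  eq_zero_of_first_eq_zero_of_sum_smul_eq_zero hs hAhat hy0 fun i hi =>
    eq_zero_of_tendsto_of_eq_add_div_smul hΔt (hX i)
      (tendsto_finsetSum _ fun j _ => (hY j).const_smul (A i j)) fun τ hτ => h τ hτ i hi

end RelaxationLimit

/-- Asymptotic preservation of globally stiffly accurate type II ImEx Runge–Kutta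
methods (first tableau rows zero, lower-right implicit submatrix invertible) applied
to the split semidiscrete KdVH system with well-prepared initial data
`vⁿ = D₋uⁿ`, `wⁿ = DD₋uⁿ`: the stage limits satisfy `V⁰ = D₋U⁰`, `W⁰ = DV⁰`, the
limit stages solve the same ImEx method applied to the semidiscrete KdV equation, and
the updates converge to `U_s⁰`, `D₋U_s⁰`, `DD₋U_s⁰` respectively, so the method is AP
for all components. -/
theorem imex_typeII_gsa_asymptotic_preserving (N s : ℕ) (hs : 0 < s)
    (Δt : ℝ) (hΔt : 0 < Δt)
    (D Dp Dm : Matrix (Fin N) (Fin N) ℝ)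
    (Ae A : Matrix (Fin s) (Fin s) ℝ) (be b : Fin s → ℝ)
    (hrow1 : ∀ j : Fin s, Ae ⟨0, hs⟩ j = 0 ∧ A ⟨0, hs⟩ j = 0)
    (hAhat : IsUnit (Matrix.of fun i j : Fin (s - 1) =>
      A ⟨i.1 + 1, by have := i.2; omega⟩ ⟨j.1 + 1, by have := j.2; omega⟩))
    (hGSA : ∀ j : Fin s, Ae ⟨s - 1, by omega⟩ j = be j ∧ A ⟨s - 1, by omega⟩ j = b j)
    (f : (Fin N → ℝ) → (Fin N → ℝ))
    (hf : ∀ u : Fin N → ℝ, f u = -(1/3 : ℝ) • (D.mulVec (u * u) + u * D.mulVec u))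
    (un vn wn : Fin N → ℝ)
    (hvn : vn = Dm.mulVec un) (hwn : wn = D.mulVec (Dm.mulVec un))
    (U V W : ℝ → Fin s → Fin N → ℝ)
    (U0 V0 W0 : Fin s → Fin N → ℝ)
    (hfirst : ∀ τ : ℝ, 0 < τ →
      U τ ⟨0, hs⟩ = un ∧ V τ ⟨0, hs⟩ = vn ∧ W τ ⟨0, hs⟩ = wn)
    (hUeq : ∀ τ : ℝ, 0 < τ → ∀ i : Fin s, 0 < i.1 →
      U τ i = un + Δt • (∑ j, Ae i j • f (U τ j))
        - Δt • (∑ j, A i j • Dp.mulVec (W τ j)))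
    (hVeq : ∀ τ : ℝ, 0 < τ → ∀ i : Fin s, 0 < i.1 →
      V τ i = vn + (Δt / τ) • (∑ j, A i j • (D.mulVec (V τ j) - W τ j)))
    (hWeq : ∀ τ : ℝ, 0 < τ → ∀ i : Fin s, 0 < i.1 →
      W τ i = wn + (Δt / τ) • (∑ j, A i j • (V τ j - Dm.mulVec (U τ j))))
    (hUlim : ∀ i, Tendsto (fun τ => U τ i) (nhdsWithin 0 (Set.Ioi 0)) (nhds (U0 i)))
    (hVlim : ∀ i, Tendsto (fun τ => V τ i) (nhdsWithin 0 (Set.Ioi 0)) (nhds (V0 i)))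
    (hWlim : ∀ i, Tendsto (fun τ => W τ i) (nhdsWithin 0 (Set.Ioi 0)) (nhds (W0 i))) :
    (∀ j, V0 j = Dm.mulVec (U0 j) ∧ W0 j = D.mulVec (V0 j)) ∧
    (∀ i, U0 i = un + Δt • (∑ j, Ae i j • f (U0 j))
      - Δt • (∑ j, A i j • (Dp * D * Dm).mulVec (U0 j))) ∧
    Tendsto
      (fun τ => un + Δt • (∑ j, be j • f (U τ j)) - Δt • (∑ j, b j • Dp.mulVec (W τ j)))
      (nhdsWithin 0 (Set.Ioi 0)) (nhds (U0 ⟨s - 1, by omega⟩)) ∧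
    Tendsto (fun τ => vn + (Δt / τ) • (∑ j, b j • (D.mulVec (V τ j) - W τ j)))
      (nhdsWithin 0 (Set.Ioi 0)) (nhds (Dm.mulVec (U0 ⟨s - 1, by omega⟩))) ∧
    Tendsto (fun τ => wn + (Δt / τ) • (∑ j, b j • (V τ j - Dm.mulVec (U τ j))))
      (nhdsWithin 0 (Set.Ioi 0)) (nhds (D.mulVec (Dm.mulVec (U0 ⟨s - 1, by omega⟩)))) := by
  obtain ⟨hU0, hV0, hW0⟩ : U0 ⟨0, hs⟩ = un ∧ V0 ⟨0, hs⟩ = vn ∧ W0 ⟨0, hs⟩ = wn :=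
    ⟨eq_of_tendsto_nhdsWithin_of_eqOn_const (hUlim _) fun τ hτ => (hfirst τ hτ).1,
      eq_of_tendsto_nhdsWithin_of_eqOn_const (hVlim _) fun τ hτ => (hfirst τ hτ).2.1,
      eq_of_tendsto_nhdsWithin_of_eqOn_const (hWlim _) fun τ hτ => (hfirst τ hτ).2.2⟩
  have hVW : (fun j => D *ᵥ V0 j - W0 j) = 0 :=
    relaxation_stages_limit_eq_zero hs hAhat hΔt.ne' hVlim
      (fun j => ((hVlim j).const_matrix_mulVec D).sub (hWlim j)) (by simp [hV0, hW0, hvn, hwn]) hVeq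
  have hWU : (fun j => V0 j - Dm *ᵥ U0 j) = 0 :=
    relaxation_stages_limit_eq_zero hs hAhat hΔt.ne' hWlim
      (fun j => (hVlim j).sub ((hUlim j).const_matrix_mulVec Dm)) (by simp [hV0, hU0, hvn]) hWeq
  have hprepared : ∀ j, V0 j = Dm *ᵥ U0 j ∧ W0 j = D *ᵥ V0 j := fun j =>
    ⟨sub_eq_zero.mp (congrFun hWU j), (sub_eq_zero.mp (congrFun hVW j)).symm⟩
  have hUeq' : ∀ τ, 0 < τ → ∀ i, U τ i = un + Δt • (∑ j, Ae i j • f (U τ j))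
      - Δt • (∑ j, A i j • Dp.mulVec (W τ j)) := fun τ hτ =>
    Fin.forall_of_zero_of_pos hs (by simp [(hfirst τ hτ).1, hrow1]) (hUeq τ hτ)
  have hVeq' := fun τ (hτ : 0 < τ) => stage_eq_of_first_row_eq_zero hs (fun j => (hrow1 j).2)
    (hfirst τ hτ).2.1 (hVeq τ hτ)
  have hWeq' := fun τ (hτ : 0 < τ) => stage_eq_of_first_row_eq_zero hs (fun j => (hrow1 j).2)
    (hfirst τ hτ).2.2 (hWeq τ hτ)
  have hkdv : ∀ i, U0 i = un + Δt • (∑ j, Ae i j • f (U0 j))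
      - Δt • (∑ j, A i j • (Dp * D * Dm).mulVec (U0 j)) := fun i => by
    have hrhs : Continuous fun p : (Fin s → Fin N → ℝ) × (Fin s → Fin N → ℝ) =>
        un + Δt • (∑ j, Ae i j • f (p.1 j)) - Δt • (∑ j, A i j • Dp.mulVec (p.2 j)) := by
      simp only [hf]; fun_prop
    have hconv := (hrhs.tendsto _).comp <|
      (tendsto_pi_nhds.2 hUlim).prodMk_nhds (tendsto_pi_nhds.2 hWlim)
    have hlim := tendsto_nhds_unique (hUlim i)
      (tendsto_nhdsWithin_congr (fun τ hτ => (hUeq' τ hτ i).symm) hconv)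
    simpa only [(hprepared _).2, (hprepared _).1, mulVec_mulVec, Matrix.mul_assoc] using hlim
  have hbe : Ae ⟨s - 1, by omega⟩ = be := funext fun j => (hGSA j).1
  have hb : A ⟨s - 1, by omega⟩ = b := funext fun j => (hGSA j).2
  refine ⟨hprepared, hkdv, ?_, ?_, ?_⟩
  · exact tendsto_nhdsWithin_congr (fun τ hτ => by rw [hUeq' τ hτ, hbe, hb]) (hUlim _)
  · rw [← (hprepared _).1]
    exact tendsto_nhdsWithin_congr (fun τ hτ => by rw [hVeq' τ hτ, hb]) (hVlim _)
  · rw [← (hprepared _).1, ← (hprepared _).2]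
    exact tendsto_nhdsWithin_congr (fun τ hτ => by rw [hWeq' τ hτ, hb]) (hWlim _)
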